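/- Let K ⊆ S_n be a subset that admits a unique minimal element u with respect to the Bruhat order, and let σ_1, σ_2 ∈ S_n. Then the set I(σ_1) K I(σ_2) = {a x b : a ≤ σ_1, x ∈ K, b ≤ σ_2} has a unique minimal element with respect to the Bruhat order; moreover the set I(σ_1) u I(σ_2) = {a u b : a ≤ σ_1, b ≤ σ_2} also has a unique minimal element, and these two minimal elements coincide. -/

import Mathlib

open scoped Classical

namespace KK

/-- The simple transposition `s_j = (j, j+1)` in `S_n` (1-indexed letters `1 ≤ j ≤ n-1`);
junk value `1` out of range. -/
def simpleRefl (n : ℕ) (j : ℕ) : Equiv.Perm (Fin n) :=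
  if h : 1 ≤ j ∧ j ≤ n - 1 then
    Equiv.swap ⟨j - 1, by omega⟩ ⟨j, by omega⟩
  else 1

/-- The permutation represented by a word in the simple transpositions. -/
def wordProd (n : ℕ) (l : List ℕ) : Equiv.Perm (Fin n) :=
  (l.map (simpleRefl n)).prod

/-- Coxeter length: minimal length of a word in simple transpositions representing `w`. -/
noncomputable def len (n : ℕ) (w : Equiv.Perm (Fin n)) : ℕ :=
  sInf {k | ∃ l : List ℕ, (∀ j ∈ l, 1 ≤ j ∧ j ≤ n - 1) ∧ l.length = k ∧ wordProd n l = w}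

/-- A word is reduced if its letters are genuine simple-transposition indices and its
length equals the Coxeter length of the permutation it represents. -/
def IsReduced (n : ℕ) (l : List ℕ) : Prop :=
  (∀ j ∈ l, 1 ≤ j ∧ j ≤ n - 1) ∧ len n (wordProd n l) = l.length

/-- Bruhat order on `S_n`: `u ≤ w` iff some reduced word for `w` contains a reduced word
for `u` as a subword. -/
def bruhatLE (n : ℕ) (u w : Equiv.Perm (Fin n)) : Prop :=
  ∃ l l' : List ℕ, IsReduced n l ∧ wordProd n l = w ∧
    l'.Sublist l ∧ IsReduced n l' ∧ wordProd n l' = u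

/-- `m` is the greatest element of `K` in the Bruhat order (hence the unique maximal one). -/
def IsBruhatGreatest (n : ℕ) (K : Set (Equiv.Perm (Fin n))) (m : Equiv.Perm (Fin n)) : Prop :=
  m ∈ K ∧ ∀ u ∈ K, bruhatLE n u m

/-- `m` is the least element of `K` in the Bruhat order (hence the unique minimal one). -/
def IsBruhatLeast (n : ℕ) (K : Set (Equiv.Perm (Fin n))) (m : Equiv.Perm (Fin n)) : Prop :=
  m ∈ K ∧ ∀ u ∈ K, bruhatLE n m u

/-- One step of the Demazure product: `w * s_j = max {w, w s_j}` in the Bruhat order. -/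
noncomputable def demStep (n : ℕ) (w : Equiv.Perm (Fin n)) (j : ℕ) : Equiv.Perm (Fin n) :=
  if len n w < len n (w * simpleRefl n j) then w * simpleRefl n j else w

/-- The Demazure product `*(w)` of a (not necessarily reduced) word. -/
noncomputable def demProd (n : ℕ) (l : List ℕ) : Equiv.Perm (Fin n) :=
  l.foldl (demStep n) 1

/-- The binary Demazure product of two permutations, `w * w' = max I(w)I(w')`. -/
noncomputable def demMul (n : ℕ) (w w' : Equiv.Perm (Fin n)) : Equiv.Perm (Fin n) :=
  if h : ∃ m, IsBruhatGreatest n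
      {x | ∃ u v, bruhatLE n u w ∧ bruhatLE n v w' ∧ x = u * v} m
  then h.choose else 1

/-- The longest element `w₀` of `S_n`. -/
def w0 (n : ℕ) : Equiv.Perm (Fin n) := Fin.revPerm



/-- `μ` is a partition with `n` nonnegative integer parts `μ 1 ≥ ⋯ ≥ μ n ≥ 0`. -/
def IsPartition (n : ℕ) (μ : ℕ → ℤ) : Prop :=
  (∀ i, 1 ≤ i → i < n → μ (i + 1) ≤ μ i) ∧ 0 ≤ μ n

/-- `(i, j)` indexes an entry strictly below the top in the triangular array:
`n ≥ i > j ≥ 1`. -/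
def inTriangle (n : ℕ) (p : ℕ × ℕ) : Prop := 1 ≤ p.2 ∧ p.2 < p.1 ∧ p.1 ≤ n

/-- A Gelfand–Tsetlin pattern of size `n`, encoded as a function `a : ℕ → ℕ → ℝ`
(value `a i j` for `n ≥ i ≥ j ≥ 1`, and `0` outside the triangle). -/
def IsGTArray (n : ℕ) (a : ℕ → ℕ → ℝ) : Prop :=
  (∀ i j, 1 ≤ j → j < i → i ≤ n →
      0 ≤ a i j - a (i - 1) j ∧ 0 ≤ a (i - 1) j - a i (j + 1)) ∧
  (∀ i j, j = 0 ∨ i < j ∨ n < i → a i j = 0)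

/-- The Gelfand–Tsetlin polytope `GT(μ)`: GT patterns of size `n` with bottom row `μ`. -/
def GTset (n : ℕ) (μ : ℕ → ℤ) : Set (ℕ → ℕ → ℝ) :=
  {a | IsGTArray n a ∧ ∀ j, 1 ≤ j → j ≤ n → a n j = (μ j : ℝ)}

/-- The integral points `GT_ℤ(μ)` of the Gelfand–Tsetlin polytope. -/
def GTZ (n : ℕ) (μ : ℕ → ℤ) : Set (ℕ → ℕ → ℝ) :=
  {a ∈ GTset n μ | ∀ i j, ∃ m : ℤ, a i j = (m : ℝ)}

/-- The weight of a GT pattern: `wt a i = Σ_{j=1}^i a i j − Σ_{j=1}^{i-1} a (i-1) j`. -/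
noncomputable def wt (a : ℕ → ℕ → ℝ) (i : ℕ) : ℝ :=
  (∑ j ∈ Finset.Icc 1 i, a i j) - ∑ j ∈ Finset.Icc 1 (i - 1), a (i - 1) j

/-- The pairs `(i,j)` with `n ≥ i > j ≥ 1` in increasing lexicographic order. -/
def pairsLex (n : ℕ) : List (ℕ × ℕ) :=
  (List.range' 2 (n - 1)).flatMap fun i => (List.range' 1 (i - 1)).map fun j => (i, j)

/-- The pairs `(i,j)` with `n ≥ i > j ≥ 1` in increasing order for the total order in
which `(i,j)` precedes `(i',j')` iff `i < i'`, or `i = i'` and `j > j'`. -/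
def pairsBar (n : ℕ) : List (ℕ × ℕ) :=
  (List.range' 2 (n - 1)).flatMap fun i => ((List.range' 1 (i - 1)).reverse).map fun j => (i, j)

/-- The pairs `(i,j)` with `n ≥ i > j ≥ 1` in decreasing order for the total order in
which `(i,j)` precedes `(i',j')` iff `i < i'`, or `i = i'` and `j > j'`:
`i` descending and, within each `i`, `j` ascending. -/
def pairsFin (n : ℕ) : List (ℕ × ℕ) :=
  ((List.range' 2 (n - 1)).reverse).flatMap fun i => (List.range' 1 (i - 1)).map fun j => (i, j)

/-- The word `𝔣(P)`: list the pairs `(i,j)` with `a (i-1) j = a i (j+1)` in the order of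
`pairsFin` and record the letter `j` for each. -/
noncomputable def fWord (n : ℕ) (a : ℕ → ℕ → ℝ) : List ℕ :=
  ((pairsFin n).filter fun p => a (p.1 - 1) p.2 = a p.1 (p.2 + 1)).map fun p => p.2

/-- The word `𝔦(Q)`: list the pairs `(i,j)` with `b i j = b (i-1) j` in increasing
lexicographic order and record the letter `i - j` for each. -/
noncomputable def iWord (n : ℕ) (b : ℕ → ℕ → ℝ) : List ℕ :=
  ((pairsLex n).filter fun p => b p.1 p.2 = b (p.1 - 1) p.2).map fun p => p.1 - p.2



/-- The sequence `d_t`, `1 ≤ t ≤ i+1`, used to define the crystal operators `e_i, f_i`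
(with the convention `a_{k,k+1} = 0` for `k ∈ {i-1, i}`). -/
noncomputable def dseq (a : ℕ → ℕ → ℝ) (i : ℕ) : ℕ → ℝ
  | 0 => 0
  | 1 => a i 1 - a (i + 1) 1
  | (t + 2) => dseq a i (t + 1) + a i (t + 1) + (if t + 2 = i + 1 then 0 else a i (t + 2))
      - (if t + 1 = i then 0 else a (i - 1) (t + 1)) - a (i + 1) (t + 2)

/-- `d = min {d_1, …, d_{i+1}}`. -/
noncomputable def dmin (a : ℕ → ℕ → ℝ) (i : ℕ) : ℝ :=
  ((Finset.Icc 1 (i + 1)).image (dseq a i)).min'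
    (Finset.Nonempty.image ⟨1, by simp⟩ _)

/-- `m`: the smallest index `t ∈ [1, i+1]` with `d_t = d`. -/
noncomputable def mIdx (a : ℕ → ℕ → ℝ) (i : ℕ) : ℕ :=
  sInf {t | t ∈ Finset.Icc 1 (i + 1) ∧ dseq a i t = dmin a i}

/-- `M`: the largest index `t ∈ [1, i+1]` with `d_t = d`. -/
noncomputable def MIdx (a : ℕ → ℕ → ℝ) (i : ℕ) : ℕ :=
  sSup {t | t ∈ Finset.Icc 1 (i + 1) ∧ dseq a i t = dmin a i}

/-- The raising crystal operator `e_i` (`none` plays the role of `0`). -/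
noncomputable def eOp (i : ℕ) (a : ℕ → ℕ → ℝ) : Option (ℕ → ℕ → ℝ) :=
  if dmin a i = 0 then none
  else some fun i' j' => if i' = i ∧ j' = mIdx a i then a i' j' + 1 else a i' j'

/-- The lowering crystal operator `f_i` (`none` plays the role of `0`). -/
noncomputable def fOp (i : ℕ) (a : ℕ → ℕ → ℝ) : Option (ℕ → ℕ → ℝ) :=
  if MIdx a i = i + 1 then none
  else some fun i' j' => if i' = i ∧ j' = MIdx a i then a i' j' - 1 else a i' j'

/-- `m`-fold iteration of a partial operator. -/
noncomputable def iterOp (op : (ℕ → ℕ → ℝ) → Option (ℕ → ℕ → ℝ)) :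
    ℕ → (ℕ → ℕ → ℝ) → Option (ℕ → ℕ → ℝ)
  | 0 => fun x => some x
  | (m + 1) => fun x => (op x).bind (iterOp op m)

/-- Apply `op i₁ ^ m₁ ∘ ⋯ ∘ op i_k ^ m_k` to `x`, given the list `[(i₁,m₁),…,(i_k,m_k)]`
(the last pair acts first). -/
noncomputable def applyWord (op : ℕ → (ℕ → ℕ → ℝ) → Option (ℕ → ℕ → ℝ)) :
    List (ℕ × ℕ) → (ℕ → ℕ → ℝ) → Option (ℕ → ℕ → ℝ)
  | [] => fun x => some x
  | (p :: rest) => fun x => (applyWord op rest x).bind (iterOp (op p.1) p.2)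

/-- The highest-weight element `G⁰_μ` of `GT_ℤ(μ)`: the element killed by every `e_i`. -/
noncomputable def G0 (n : ℕ) (μ : ℕ → ℤ) : ℕ → ℕ → ℝ :=
  if h : ∃ P, P ∈ GTZ n μ ∧ ∀ i, 1 ≤ i → i ≤ n - 1 → eOp i P = none then h.choose else 0

/-- The lowest-weight element `G*_μ` of `GT_ℤ(μ)`: the element killed by every `f_i`. -/
noncomputable def Gstar (n : ℕ) (μ : ℕ → ℤ) : ℕ → ℕ → ℝ :=
  if h : ∃ P, P ∈ GTZ n μ ∧ ∀ i, 1 ≤ i → i ≤ n - 1 → fOp i P = none then h.choose else 0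

/-- The Demazure crystal `D(μ, w)` computed from the reduced word `l` for `w`:
`{f_{i₁}^{m₁} ⋯ f_{i_k}^{m_k}(G⁰_μ)} ∩ GT_ℤ(μ)`. -/
noncomputable def demCrystal (n : ℕ) (μ : ℕ → ℤ) (l : List ℕ) : Set (ℕ → ℕ → ℝ) :=
  {P | P ∈ GTZ n μ ∧
    ∃ ms : List ℕ, ms.length = l.length ∧ applyWord fOp (l.zip ms) (G0 n μ) = some P}

/-- The opposite Demazure crystal `D(μ, w)^op` computed from the reduced word `l`
for `w·w₀`: `{e_{j₁}^{m₁} ⋯ e_{j_t}^{m_t}(G*_μ)} ∩ GT_ℤ(μ)`. -/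
noncomputable def opDemCrystal (n : ℕ) (μ : ℕ → ℤ) (l : List ℕ) : Set (ℕ → ℕ → ℝ) :=
  {P | P ∈ GTZ n μ ∧
    ∃ ms : List ℕ, ms.length = l.length ∧ applyWord eOp (l.zip ms) (Gstar n μ) = some P}

/-- `σ(F)`: the product of `s_{i-j}` over `(i,j) ∈ F` in increasing lexicographic order. -/
noncomputable def sigmaF (n : ℕ) (F : Finset (ℕ × ℕ)) : Equiv.Perm (Fin n) :=
  wordProd n (((pairsLex n).filter fun p => p ∈ F).map fun p => p.1 - p.2)

/-- `σ̄(F)`: the product of `s_j` over `(i,j) ∈ F` in increasing order for the total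
order in which `(i,j)` precedes `(i',j')` iff `i < i'`, or `i = i'` and `j > j'`. -/
noncomputable def sigmaBarF (n : ℕ) (F : Finset (ℕ × ℕ)) : Equiv.Perm (Fin n) :=
  wordProd n (((pairsBar n).filter fun p => p ∈ F).map fun p => p.2)

/-- The Kogan face `K(μ, F)`: the face of `GT(μ)` cut out by `a i j = a (i-1) j`,
`(i,j) ∈ F`. -/
def KoganFace (n : ℕ) (μ : ℕ → ℤ) (F : Finset (ℕ × ℕ)) : Set (ℕ → ℕ → ℝ) :=
  {a ∈ GTset n μ | ∀ p ∈ F, a p.1 p.2 = a (p.1 - 1) p.2}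

/-- The dual Kogan face `K̄(μ, F)`: the face of `GT(μ)` cut out by
`a (i-1) j = a i (j+1)`, `(i,j) ∈ F`. -/
def dualKoganFace (n : ℕ) (μ : ℕ → ℤ) (F : Finset (ℕ × ℕ)) : Set (ℕ → ℕ → ℝ) :=
  {a ∈ GTset n μ | ∀ p ∈ F, a (p.1 - 1) p.2 = a p.1 (p.2 + 1)}

/-- The BiKogan face `K_{λ,μ}(F, F')` of `GT(λ) × GT(μ)`. -/
def biKoganFace (n : ℕ) (lam μ : ℕ → ℤ) (F F' : Finset (ℕ × ℕ)) :
    Set ((ℕ → ℕ → ℝ) × (ℕ → ℕ → ℝ)) :=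
  {PQ | PQ.1 ∈ GTset n lam ∧ PQ.2 ∈ GTset n μ ∧
    (∀ p ∈ F, PQ.1 (p.1 - 1) p.2 = PQ.1 p.1 (p.2 + 1)) ∧
    (∀ p ∈ F', PQ.2 p.1 p.2 = PQ.2 (p.1 - 1) p.2)}

/-- `ϖ(F, F') = σ̄(F)⁻¹ · σ(F')`. -/
noncomputable def biVarpi (n : ℕ) (F F' : Finset (ℕ × ℕ)) : Equiv.Perm (Fin n) :=
  (sigmaBarF n F)⁻¹ * sigmaF n F'

/-- The BiKogan face `K_{λ,μ}(F, F')` is reduced if `ℓ(ϖ(F,F')) = |F| + |F'|`. -/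
def biKoganReduced (n : ℕ) (F F' : Finset (ℕ × ℕ)) : Prop :=
  len n (biVarpi n F F') = F.card + F'.card


/-!
Fix a reduced word for `σ₂` and multiply `u` on the right by those of its letters, in order,
that shorten the current permutation. The result is `u b₀` with `b₀ ≤ σ₂`, and the lifting
property of the Bruhat order shows that it lies below `c b` for every `c ≥ u` and `b ≤ σ₂`.
Doing the same on the left (through inverses) gives `a₀ u b₀ ≤ a c b` for all `a ≤ σ₁`,
`c ∈ K`, `b ≤ σ₂`, with `a₀ ≤ σ₁`. The properties of the Bruhat order used here
(transitivity, invariance under inversion, lifting) come from identifying the subword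
definition with the chain definition, which rests on the strong exchange property.
-/

abbrev IsSimpleWord (n : ℕ) (l : List ℕ) : Prop := ∀ j ∈ l, 1 ≤ j ∧ j ≤ n - 1

variable {n : ℕ}

lemma IsSimpleWord.sublist {l t : List ℕ} (hl : IsSimpleWord n l) (h : t.Sublist l) :
    IsSimpleWord n t :=
  fun j hj => hl j (h.mem hj)

lemma isSimpleWord_append {l₁ l₂ : List ℕ} :
    IsSimpleWord n (l₁ ++ l₂) ↔ IsSimpleWord n l₁ ∧ IsSimpleWord n l₂ :=
  List.forall_mem_append

@[simp] lemma isSimpleWord_nil : IsSimpleWord n [] := by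
  simp [IsSimpleWord]

lemma isSimpleWord_singleton {j : ℕ} : IsSimpleWord n [j] ↔ 1 ≤ j ∧ j ≤ n - 1 := by
  simp [IsSimpleWord]

@[simp] lemma wordProd_nil : wordProd n [] = 1 := rfl

lemma wordProd_cons (j : ℕ) (l : List ℕ) :
    wordProd n (j :: l) = simpleRefl n j * wordProd n l := by
  simp [wordProd]

lemma wordProd_append (l₁ l₂ : List ℕ) :
    wordProd n (l₁ ++ l₂) = wordProd n l₁ * wordProd n l₂ := by
  simp [wordProd]

lemma wordProd_concat (l : List ℕ) (j : ℕ) :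
    wordProd n (l ++ [j]) = wordProd n l * simpleRefl n j := by
  simp [wordProd]

lemma simpleRefl_of_le {j : ℕ} (h1 : 1 ≤ j) (h2 : j ≤ n - 1) :
    simpleRefl n j = Equiv.swap ⟨j - 1, by omega⟩ ⟨j, by omega⟩ :=
  dif_pos ⟨h1, h2⟩

@[simp] lemma simpleRefl_mul_self (j : ℕ) : simpleRefl n j * simpleRefl n j = 1 := by
  unfold simpleRefl
  split <;> simp

lemma simpleRefl_inv (j : ℕ) : (simpleRefl n j)⁻¹ = simpleRefl n j :=
  inv_eq_of_mul_eq_one_right (simpleRefl_mul_self j)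

@[simp] lemma mul_simpleRefl_mul_simpleRefl (w : Equiv.Perm (Fin n)) (j : ℕ) :
    w * simpleRefl n j * simpleRefl n j = w := by
  rw [mul_assoc, simpleRefl_mul_self, mul_one]

lemma wordProd_reverse (l : List ℕ) : wordProd n l.reverse = (wordProd n l)⁻¹ := by
  induction l with
  | nil => simp
  | cons j l ih =>
    rw [List.reverse_cons, wordProd_concat, ih, wordProd_cons, mul_inv_rev, simpleRefl_inv]

lemma exists_word (w : Equiv.Perm (Fin n)) : ∃ l, IsSimpleWord n l ∧ wordProd n l = w := by
  cases n with
  | zero => exact ⟨[], isSimpleWord_nil, Subsingleton.elim _ _⟩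
  | succ m =>
    have hw : w ∈ Submonoid.closure (Set.range fun i : Fin m ↦ Equiv.swap i.castSucc i.succ) :=
      Equiv.Perm.mclosure_swap_castSucc_succ m ▸ Submonoid.mem_top w
    induction hw using Submonoid.closure_induction with
    | mem _ hx =>
      obtain ⟨i, rfl⟩ := hx
      refine ⟨[i.val + 1], isSimpleWord_singleton.2 ⟨by omega, by omega⟩, ?_⟩
      rw [wordProd_cons, wordProd_nil, mul_one, simpleRefl_of_le (by omega) (by omega)]
      rfl
    | one => exact ⟨[], isSimpleWord_nil, rfl⟩
    | mul _ _ _ _ hx hy =>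
      obtain ⟨l₁, hl₁, rfl⟩ := hx
      obtain ⟨l₂, hl₂, rfl⟩ := hy
      exact ⟨l₁ ++ l₂, isSimpleWord_append.2 ⟨hl₁, hl₂⟩, wordProd_append l₁ l₂⟩

lemma len_le_length {l : List ℕ} (hl : IsSimpleWord n l) : len n (wordProd n l) ≤ l.length :=
  Nat.sInf_le ⟨l, hl, rfl, rfl⟩

lemma exists_word_length_eq_len (w : Equiv.Perm (Fin n)) :
    ∃ l, IsSimpleWord n l ∧ l.length = len n w ∧ wordProd n l = w := by
  obtain ⟨l, hl, hw⟩ := exists_word w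
  exact Nat.sInf_mem
    (s := {k | ∃ l : List ℕ, IsSimpleWord n l ∧ l.length = k ∧ wordProd n l = w})
    ⟨l.length, l, hl, rfl, hw⟩

lemma exists_reduced_word (w : Equiv.Perm (Fin n)) :
    ∃ l, IsReduced n l ∧ wordProd n l = w := by
  obtain ⟨l, hl, hlen, rfl⟩ := exists_word_length_eq_len w
  exact ⟨l, ⟨hl, hlen.symm⟩, rfl⟩

lemma len_mul_le (x y : Equiv.Perm (Fin n)) : len n (x * y) ≤ len n x + len n y := by
  obtain ⟨l₁, hl₁, hlen₁, rfl⟩ := exists_word_length_eq_len x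
  obtain ⟨l₂, hl₂, hlen₂, rfl⟩ := exists_word_length_eq_len y
  rw [← wordProd_append, ← hlen₁, ← hlen₂, ← List.length_append]
  exact len_le_length (isSimpleWord_append.2 ⟨hl₁, hl₂⟩)

lemma len_inv_le (w : Equiv.Perm (Fin n)) : len n w⁻¹ ≤ len n w := by
  obtain ⟨l, hl, hlen, rfl⟩ := exists_word_length_eq_len w
  rw [← wordProd_reverse, ← hlen, ← List.length_reverse]
  exact len_le_length fun j hj => hl j (List.mem_reverse.mp hj)

@[simp] lemma len_inv (w : Equiv.Perm (Fin n)) : len n w⁻¹ = len n w :=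
  le_antisymm (len_inv_le w) (by simpa using len_inv_le w⁻¹)

lemma len_simpleRefl_le (j : ℕ) : len n (simpleRefl n j) ≤ 1 := by
  by_cases hj : 1 ≤ j ∧ j ≤ n - 1
  · simpa [wordProd] using len_le_length (n := n) (isSimpleWord_singleton.2 hj)
  · have := len_le_length (n := n) isSimpleWord_nil
    simp only [simpleRefl, hj, dite_false, wordProd_nil, List.length_nil] at this ⊢
    omega

lemma sign_wordProd {l : List ℕ} (hl : IsSimpleWord n l) :
    Equiv.Perm.sign (wordProd n l) = (-1) ^ l.length := by
  induction l with
  | nil => simp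
  | cons j l ih =>
    obtain ⟨⟨h1, h2⟩, hl⟩ := List.forall_mem_cons.1 hl
    rw [wordProd_cons, map_mul, ih hl, simpleRefl_of_le h1 h2,
      Equiv.Perm.sign_swap (by simp only [ne_eq, Fin.ext_iff]; omega), List.length_cons,
      pow_succ, mul_comm]

lemma sign_eq_neg_one_pow_len (w : Equiv.Perm (Fin n)) :
    Equiv.Perm.sign w = (-1) ^ len n w := by
  obtain ⟨l, hl, hlen, rfl⟩ := exists_word_length_eq_len w
  rw [sign_wordProd hl, hlen]

/-- By subadditivity the length changes by at most one, and since the sign flips it cannot stay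
the same. -/
lemma len_mul_simpleRefl {j : ℕ} (hj : 1 ≤ j ∧ j ≤ n - 1) (w : Equiv.Perm (Fin n)) :
    len n (w * simpleRefl n j) = len n w + 1 ∨ len n (w * simpleRefl n j) + 1 = len n w := by
  have hle := len_mul_le w (simpleRefl n j)
  have hge := len_mul_le (w * simpleRefl n j) (simpleRefl n j)
  have hs := len_simpleRefl_le (n := n) j
  rw [mul_simpleRefl_mul_simpleRefl] at hge
  have hne : len n (w * simpleRefl n j) ≠ len n w := by
    intro heq
    have hsign := sign_eq_neg_one_pow_len (w * simpleRefl n j)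
    rw [heq, map_mul, sign_eq_neg_one_pow_len w, simpleRefl_of_le hj.1 hj.2,
      Equiv.Perm.sign_swap (by simp only [ne_eq, Fin.ext_iff]; omega)] at hsign
    exact absurd (mul_eq_left.mp hsign) (by decide)
  omega

lemma len_mul_simpleRefl_lt_of_not_lt {j : ℕ} (hj : 1 ≤ j ∧ j ≤ n - 1)
    {w : Equiv.Perm (Fin n)} (h : ¬ len n w < len n (w * simpleRefl n j)) :
    len n (w * simpleRefl n j) < len n w := by
  have := len_mul_simpleRefl hj w
  omega

@[simp] lemma isReduced_nil : IsReduced n [] :=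
  ⟨isSimpleWord_nil, Nat.le_zero.mp (len_le_length isSimpleWord_nil)⟩

lemma IsReduced.append_left {l₁ l₂ : List ℕ} (h : IsReduced n (l₁ ++ l₂)) :
    IsReduced n l₁ := by
  obtain ⟨hl₁, hl₂⟩ := isSimpleWord_append.1 h.1
  have hmul := len_mul_le (wordProd n l₁) (wordProd n l₂)
  rw [← wordProd_append, h.2, List.length_append] at hmul
  have := len_le_length hl₁
  have := len_le_length hl₂
  exact ⟨hl₁, by omega⟩

lemma IsReduced.concat {t : List ℕ} (ht : IsReduced n t) {j : ℕ} (hj : 1 ≤ j ∧ j ≤ n - 1)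
    (hup : len n (wordProd n t) < len n (wordProd n t * simpleRefl n j)) :
    IsReduced n (t ++ [j]) := by
  refine ⟨isSimpleWord_append.2 ⟨ht.1, isSimpleWord_singleton.2 hj⟩, ?_⟩
  rw [wordProd_concat, List.length_append, List.length_singleton, ← ht.2]
  have := len_mul_simpleRefl hj (wordProd n t)
  omega

lemma isReduced_of_len_mul_add_length {t : List ℕ} (ht : IsSimpleWord n t)
    {v : Equiv.Perm (Fin n)} (h : len n (v * wordProd n t) + t.length = len n v) :
    IsReduced n t := by
  have hv := len_mul_le (v * wordProd n t) (wordProd n t)⁻¹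
  rw [mul_inv_cancel_right, len_inv] at hv
  have := len_le_length ht
  exact ⟨ht, by omega⟩

lemma exists_reduced_word_concat {y : Equiv.Perm (Fin n)} {j : ℕ} (hj : 1 ≤ j ∧ j ≤ n - 1)
    (hy : len n (y * simpleRefl n j) < len n y) :
    ∃ ρ, IsReduced n (ρ ++ [j]) ∧ wordProd n ρ = y * simpleRefl n j := by
  obtain ⟨ρ, hρ, hρy⟩ := exists_reduced_word (y * simpleRefl n j)
  refine ⟨ρ, hρ.concat hj ?_, hρy⟩
  rwa [hρy, mul_simpleRefl_mul_simpleRefl]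

lemma eq_of_simpleRefl_apply_lt {j : ℕ} {A B : Fin n} (hAB : A < B)
    (h : simpleRefl n j B < simpleRefl n j A) : (A : ℕ) = j - 1 ∧ (B : ℕ) = j := by
  unfold simpleRefl at h
  split at h
  · simp only [Equiv.swap_apply_def, Fin.lt_def, Fin.ext_iff] at h hAB
    split_ifs at h <;> simp_all <;> omega
  · exact absurd hAB (not_lt.2 h.le)

lemma exists_eraseIdx_of_inv_apply_lt {a b : Fin n} (hab : a < b) {l : List ℕ}
    (hl : IsSimpleWord n l) (h : (wordProd n l)⁻¹ b < (wordProd n l)⁻¹ a) :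
    ∃ k < l.length, Equiv.swap a b * wordProd n l = wordProd n (l.eraseIdx k) := by
  induction l using List.reverseRecOn with
  | nil => exact absurd hab (not_lt.2 h.le)
  | append_singleton l j ih =>
    obtain ⟨hl, hj⟩ := isSimpleWord_append.1 hl
    obtain ⟨hj1, hj2⟩ := isSimpleWord_singleton.1 hj
    set v := wordProd n l
    rw [wordProd_concat, mul_inv_rev, simpleRefl_inv] at h
    by_cases hv : v⁻¹ b < v⁻¹ a
    · obtain ⟨k, hk, hke⟩ := ih hl hv
      refine ⟨k, by simp; omega, ?_⟩
      rw [List.eraseIdx_append_of_lt_length hk, wordProd_concat, wordProd_concat, ← hke,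
        mul_assoc]
    · -- the pair is inverted by the last letter, which is therefore the one to delete
      have hvab : v⁻¹ a < v⁻¹ b :=
        lt_of_le_of_ne (not_lt.1 hv) (v⁻¹.injective.ne (ne_of_lt hab))
      obtain ⟨hA, hB⟩ := eq_of_simpleRefl_apply_lt hvab h
      have hp : (⟨j - 1, by omega⟩ : Fin n) = v⁻¹ a := Fin.ext hA.symm
      have hq : (⟨j, by omega⟩ : Fin n) = v⁻¹ b := Fin.ext hB.symm
      refine ⟨l.length, by simp, ?_⟩
      rw [List.eraseIdx_append_of_length_le le_rfl, Nat.sub_self, List.eraseIdx_cons_zero,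
        List.append_nil, wordProd_concat, simpleRefl_of_le hj1 hj2, hp, hq,
        Equiv.mul_swap_eq_swap_mul, ← mul_assoc]
      simp [v]

lemma inv_apply_lt_of_len_swap_mul_lt {a b : Fin n} (hab : a < b) {w : Equiv.Perm (Fin n)}
    (h : len n (Equiv.swap a b * w) < len n w) : w⁻¹ b < w⁻¹ a := by
  by_contra hba
  have hab' : w⁻¹ a < w⁻¹ b :=
    lt_of_le_of_ne (not_lt.1 hba) (w⁻¹.injective.ne (ne_of_lt hab))
  obtain ⟨l, hl, hlen, hw⟩ := exists_word_length_eq_len (Equiv.swap a b * w)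
  obtain ⟨k, hk, hke⟩ := exists_eraseIdx_of_inv_apply_lt hab hl (by simpa [hw] using hab')
  rw [hw, ← mul_assoc, Equiv.swap_mul_self, one_mul] at hke
  have := len_le_length (hl.sublist (List.eraseIdx_sublist l k))
  rw [← hke, List.length_eraseIdx_of_lt hk] at this
  omega

/-- The strong exchange property. -/
lemma exists_eraseIdx_of_len_swap_mul_lt {l : List ℕ} (hl : IsSimpleWord n l) {a b : Fin n}
    (hab : a ≠ b) (h : len n (Equiv.swap a b * wordProd n l) < len n (wordProd n l)) :
    ∃ k < l.length, Equiv.swap a b * wordProd n l = wordProd n (l.eraseIdx k) := by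
  rcases hab.lt_or_gt with hlt | hlt
  · exact exists_eraseIdx_of_inv_apply_lt hlt hl (inv_apply_lt_of_len_swap_mul_lt hlt h)
  · rw [Equiv.swap_comm] at h ⊢
    exact exists_eraseIdx_of_inv_apply_lt hlt hl (inv_apply_lt_of_len_swap_mul_lt hlt h)

lemma exists_reduced_sublist {l : List ℕ} (hl : IsSimpleWord n l) :
    ∃ t, t.Sublist l ∧ IsReduced n t ∧ wordProd n t = wordProd n l := by
  induction l using List.reverseRecOn with
  | nil => exact ⟨[], List.Sublist.refl _, isReduced_nil, rfl⟩
  | append_singleton l j ih =>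
    obtain ⟨hl, hj⟩ := isSimpleWord_append.1 hl
    obtain ⟨hj1, hj2⟩ := isSimpleWord_singleton.1 hj
    obtain ⟨t, hts, ht, htl⟩ := ih hl
    rw [wordProd_concat, ← htl]
    rcases len_mul_simpleRefl ⟨hj1, hj2⟩ (wordProd n t) with hup | hdown
    · exact ⟨t ++ [j], hts.append (List.Sublist.refl _), ht.concat ⟨hj1, hj2⟩ (by omega),
        wordProd_concat t j⟩
    · set p : Fin n := ⟨j - 1, by omega⟩
      set q : Fin n := ⟨j, by omega⟩
      have hconj : wordProd n t * simpleRefl n j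
          = Equiv.swap (wordProd n t p) (wordProd n t q) * wordProd n t := by
        rw [simpleRefl_of_le hj1 hj2, Equiv.mul_swap_eq_swap_mul]
      have hpq : wordProd n t p ≠ wordProd n t q :=
        (wordProd n t).injective.ne (by simp only [ne_eq, Fin.ext_iff, p, q]; omega)
      obtain ⟨k, hk, hke⟩ :=
        exists_eraseIdx_of_len_swap_mul_lt ht.1 hpq (by rw [← hconj]; omega)
      rw [hconj, hke]
      refine ⟨t.eraseIdx k, (List.eraseIdx_sublist t k).trans (hts.trans (by simp)),
        ⟨IsSimpleWord.sublist ht.1 (List.eraseIdx_sublist t k), ?_⟩, rfl⟩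
      rw [← hke, ← hconj, List.length_eraseIdx_of_lt hk, ← ht.2]
      omega

def BruhatStep (n : ℕ) (x y : Equiv.Perm (Fin n)) : Prop :=
  (∃ a b : Fin n, a ≠ b ∧ y = x * Equiv.swap a b) ∧ len n x < len n y

/-- The chain definition of the Bruhat order. -/
def ChainLE (n : ℕ) : Equiv.Perm (Fin n) → Equiv.Perm (Fin n) → Prop :=
  Relation.ReflTransGen (BruhatStep n)

lemma bruhatStep_mul_simpleRefl {y : Equiv.Perm (Fin n)} {j : ℕ} (hj : 1 ≤ j ∧ j ≤ n - 1)
    (h : len n y < len n (y * simpleRefl n j)) : BruhatStep n y (y * simpleRefl n j) :=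
  ⟨⟨⟨j - 1, by omega⟩, ⟨j, by omega⟩, by simp [Fin.ext_iff]; omega,
    by rw [simpleRefl_of_le hj.1 hj.2]⟩, h⟩

lemma BruhatStep.mul_simpleRefl {y z : Equiv.Perm (Fin n)} (h : BruhatStep n z y) {j : ℕ}
    (hj : 1 ≤ j ∧ j ≤ n - 1) (hz : len n z < len n (z * simpleRefl n j))
    (hy : len n y < len n (y * simpleRefl n j)) :
    BruhatStep n (z * simpleRefl n j) (y * simpleRefl n j) := by
  obtain ⟨⟨a, b, hab, rfl⟩, hlen⟩ := h
  refine ⟨⟨simpleRefl n j a, simpleRefl n j b, (simpleRefl n j).injective.ne hab, ?_⟩, ?_⟩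
  · rw [Equiv.swap_apply_apply, simpleRefl_inv]
    simp only [mul_assoc]
    rw [← mul_assoc (simpleRefl n j) (simpleRefl n j), simpleRefl_mul_self, one_mul]
  · have := len_mul_simpleRefl hj z
    have := len_mul_simpleRefl hj (z * Equiv.swap a b)
    omega

lemma BruhatStep.inv {x y : Equiv.Perm (Fin n)} (h : BruhatStep n x y) :
    BruhatStep n x⁻¹ y⁻¹ := by
  obtain ⟨⟨a, b, hab, rfl⟩, hlen⟩ := h
  have hinv : (x * Equiv.swap a b)⁻¹ = x⁻¹ * Equiv.swap (x a) (x b) := by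
    rw [mul_inv_rev, Equiv.swap_inv, Equiv.mul_swap_eq_swap_mul]
    simp
  exact ⟨⟨x a, x b, x.injective.ne hab, hinv⟩, by rwa [len_inv, len_inv]⟩

lemma ChainLE.inv {x y : Equiv.Perm (Fin n)} (h : ChainLE n x y) : ChainLE n x⁻¹ y⁻¹ :=
  Relation.ReflTransGen.lift (p := BruhatStep n) (·⁻¹) (fun _ _ => BruhatStep.inv) _ _ h

/-- One half of the subword property. -/
lemma exists_sublist_of_chainLE {u w : Equiv.Perm (Fin n)} (h : ChainLE n u w) {l : List ℕ}
    (hl : IsReduced n l) (hw : wordProd n l = w) :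
    ∃ t, t.Sublist l ∧ IsReduced n t ∧ wordProd n t = u := by
  induction h generalizing l with
  | refl => exact ⟨l, List.Sublist.refl _, hl, hw⟩
  | @tail z w _ hstep ih =>
    obtain ⟨⟨a, b, hab, rfl⟩, hlen⟩ := hstep
    have hz : Equiv.swap (wordProd n l a) (wordProd n l b) * wordProd n l = z := by
      rw [← Equiv.mul_swap_eq_swap_mul, hw, mul_assoc, Equiv.swap_mul_self, mul_one]
    obtain ⟨k, -, hk⟩ := exists_eraseIdx_of_len_swap_mul_lt hl.1
      ((wordProd n l).injective.ne hab) (by rwa [hz, hw])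
    obtain ⟨ρ, hρ, hρr, hρz⟩ :=
      exists_reduced_sublist (IsSimpleWord.sublist hl.1 (List.eraseIdx_sublist l k))
    obtain ⟨t, ht, htr, htu⟩ := ih hρr (by rw [hρz, ← hk, hz])
    exact ⟨t, ht.trans (hρ.trans (List.eraseIdx_sublist l k)), htr, htu⟩

lemma sublist_concat_cases {α : Type*} {t l : List α} {j : α} (h : t.Sublist (l ++ [j])) :
    t.Sublist l ∨ ∃ t₁, t = t₁ ++ [j] ∧ t₁.Sublist l := by
  obtain ⟨t₁, t₂, rfl, h₁, h₂⟩ := List.sublist_append_iff.1 h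
  rcases List.sublist_singleton.1 h₂ with rfl | rfl
  · exact Or.inl (by simpa using h₁)
  · exact Or.inr ⟨t₁, rfl, h₁⟩

lemma demStep_of_lt {y : Equiv.Perm (Fin n)} {j : ℕ}
    (h : len n y < len n (y * simpleRefl n j)) : demStep n y j = y * simpleRefl n j :=
  if_pos h

lemma demStep_of_not_lt {y : Equiv.Perm (Fin n)} {j : ℕ}
    (h : ¬ len n y < len n (y * simpleRefl n j)) : demStep n y j = y :=
  if_neg h

/-- The converse half of the subword property, for words of length at most `N`. -/
def SubwordChainUpTo (n N : ℕ) : Prop :=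
  ∀ l t : List ℕ, IsReduced n l → l.length ≤ N → t.Sublist l → IsReduced n t →
    ChainLE n (wordProd n t) (wordProd n l)

lemma SubwordChainUpTo.mono {M N : ℕ} (h : SubwordChainUpTo n N) (hMN : M ≤ N) :
    SubwordChainUpTo n M :=
  fun l t hl hlen => h l t hl (hlen.trans hMN)

lemma chainLE_mul_simpleRefl_of_len_lt {y z : Equiv.Perm (Fin n)} {j : ℕ}
    (hj : 1 ≤ j ∧ j ≤ n - 1) (hsub : SubwordChainUpTo n (len n y)) (hzy : ChainLE n z y)
    (hz : len n z < len n (z * simpleRefl n j)) (hy : len n (y * simpleRefl n j) < len n y) :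
    ChainLE n (z * simpleRefl n j) y := by
  obtain ⟨ρ, hρ, hρy⟩ := exists_reduced_word_concat hj hy
  have hρj : wordProd n (ρ ++ [j]) = y := by
    rw [wordProd_concat, hρy, mul_simpleRefl_mul_simpleRefl]
  obtain ⟨t, ht, htr, rfl⟩ := exists_sublist_of_chainLE hzy hρ hρj
  rcases sublist_concat_cases ht with ht | ⟨t, rfl, -⟩
  · have := hsub _ _ hρ (by rw [← hρ.2, hρj]) (ht.append (List.Sublist.refl _))
      (htr.concat hj hz)
    rwa [wordProd_concat, hρj] at this
  · -- a reduced word ending in `j` would make `z * s_j` shorter than `z`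
    have hlen := htr.2
    have := len_le_length (IsReduced.append_left htr).1
    rw [wordProd_concat] at hz hlen
    rw [mul_simpleRefl_mul_simpleRefl] at hz
    simp only [List.length_append, List.length_singleton] at hlen
    omega

lemma chainLE_mul_simpleRefl_demStep {N : ℕ} (hsub : SubwordChainUpTo n N)
    {x y : Equiv.Perm (Fin n)} (hxy : ChainLE n x y) (hy : len n y ≤ N) {j : ℕ}
    (hj : 1 ≤ j ∧ j ≤ n - 1) (hx : len n x < len n (x * simpleRefl n j)) :
    ChainLE n (x * simpleRefl n j) (demStep n y j) := by
  induction hxy with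
  | refl => rw [demStep_of_lt hx]; exact Relation.ReflTransGen.refl
  | @tail z y _ hzy ih =>
    have h := ih (hzy.2.trans_le hy).le
    by_cases hzj : len n z < len n (z * simpleRefl n j) <;>
      by_cases hyj : len n y < len n (y * simpleRefl n j)
    · rw [demStep_of_lt hzj] at h
      rw [demStep_of_lt hyj]
      exact h.tail (hzy.mul_simpleRefl hj hzj hyj)
    · rw [demStep_of_lt hzj] at h
      rw [demStep_of_not_lt hyj]
      exact h.trans (chainLE_mul_simpleRefl_of_len_lt hj (hsub.mono hy)
        (Relation.ReflTransGen.single hzy) hzj (len_mul_simpleRefl_lt_of_not_lt hj hyj))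
    · rw [demStep_of_not_lt hzj] at h
      rw [demStep_of_lt hyj]
      exact (h.tail hzy).tail (bruhatStep_mul_simpleRefl hj hyj)
    · rw [demStep_of_not_lt hzj] at h
      rw [demStep_of_not_lt hyj]
      exact h.tail hzy

lemma subwordChainUpTo (N : ℕ) : SubwordChainUpTo n N := by
  induction N with
  | zero =>
    intro l t _ hl ht _
    obtain rfl := List.length_eq_zero_iff.1 (Nat.le_zero.1 hl)
    obtain rfl := List.sublist_nil.1 ht
    exact Relation.ReflTransGen.refl
  | succ N ih =>
    intro l t hl hlen ht htr
    rcases List.eq_nil_or_concat' l with rfl | ⟨l, j, rfl⟩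
    · rw [List.sublist_nil.1 ht]
      exact Relation.ReflTransGen.refl
    · have hj := isSimpleWord_singleton.1 (isSimpleWord_append.1 hl.1).2
      have hl' := hl.append_left
      have hup : len n (wordProd n l) < len n (wordProd n l * simpleRefl n j) := by
        rw [← wordProd_concat, hl.2, hl'.2]; simp
      rw [List.length_append, List.length_singleton] at hlen
      rw [wordProd_concat, ← demStep_of_lt hup]
      rcases sublist_concat_cases ht with ht | ⟨t, rfl, ht₁⟩
      · rw [demStep_of_lt hup]
        exact (ih l t hl' (by omega) ht htr).tail (bruhatStep_mul_simpleRefl hj hup)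
      · have ht' := htr.append_left
        rw [wordProd_concat]
        refine chainLE_mul_simpleRefl_demStep ih (ih l t hl' (by omega) ht₁ ht')
          (by rw [hl'.2]; omega) hj ?_
        rw [← wordProd_concat, htr.2, ht'.2]; simp

lemma chainLE_wordProd_of_sublist {l t : List ℕ} (hl : IsReduced n l) (ht : t.Sublist l)
    (htr : IsReduced n t) : ChainLE n (wordProd n t) (wordProd n l) :=
  subwordChainUpTo l.length l t hl le_rfl ht htr

lemma bruhatLE_iff_chainLE {u w : Equiv.Perm (Fin n)} : bruhatLE n u w ↔ ChainLE n u w := by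
  constructor
  · rintro ⟨l, t, hl, rfl, ht, htr, rfl⟩
    exact chainLE_wordProd_of_sublist hl ht htr
  · intro h
    obtain ⟨l, hl, rfl⟩ := exists_reduced_word w
    obtain ⟨t, ht, htr, rfl⟩ := exists_sublist_of_chainLE h hl rfl
    exact ⟨l, t, hl, rfl, ht, htr, rfl⟩

noncomputable def downStep (n : ℕ) (v : Equiv.Perm (Fin n)) (j : ℕ) : Equiv.Perm (Fin n) :=
  if len n (v * simpleRefl n j) < len n v then v * simpleRefl n j else v

/-- `downFold n v β` is the least element of `{c * wordProd n t | v ≤ c, t <+ β}`. -/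
noncomputable def downFold (n : ℕ) (v : Equiv.Perm (Fin n)) (β : List ℕ) :
    Equiv.Perm (Fin n) :=
  β.foldl (downStep n) v

lemma chainLE_downStep_self {j : ℕ} (hj : 1 ≤ j ∧ j ≤ n - 1) (v : Equiv.Perm (Fin n)) :
    ChainLE n (downStep n v j) v := by
  unfold downStep
  split_ifs with h
  · refine Relation.ReflTransGen.single ?_
    have := bruhatStep_mul_simpleRefl hj (by rwa [mul_simpleRefl_mul_simpleRefl])
    rwa [mul_simpleRefl_mul_simpleRefl] at this
  · exact Relation.ReflTransGen.refl

/-- A form of the lifting property. -/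
lemma chainLE_downStep_mul_simpleRefl {u y : Equiv.Perm (Fin n)} (h : ChainLE n u y) {j : ℕ}
    (hj : 1 ≤ j ∧ j ≤ n - 1) (hy : len n (y * simpleRefl n j) < len n y) :
    ChainLE n (downStep n u j) (y * simpleRefl n j) := by
  obtain ⟨ρ, hρ, hρy⟩ := exists_reduced_word_concat hj hy
  have hρj : wordProd n (ρ ++ [j]) = y := by
    rw [wordProd_concat, hρy, mul_simpleRefl_mul_simpleRefl]
  obtain ⟨t, ht, htr, rfl⟩ := exists_sublist_of_chainLE h hρ hρj
  rcases sublist_concat_cases ht with ht | ⟨t, rfl, ht₁⟩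
  · rw [← hρy]
    exact (chainLE_downStep_self hj _).trans (chainLE_wordProd_of_sublist hρ.append_left ht htr)
  · have hdown :
        len n (wordProd n (t ++ [j]) * simpleRefl n j) < len n (wordProd n (t ++ [j])) := by
      rw [htr.2, wordProd_concat, mul_simpleRefl_mul_simpleRefl, htr.append_left.2]
      simp
    rw [downStep, if_pos hdown, wordProd_concat, mul_simpleRefl_mul_simpleRefl, ← hρy]
    exact chainLE_wordProd_of_sublist hρ.append_left ht₁ htr.append_left

lemma chainLE_downFold {β : List ℕ} (hβ : IsSimpleWord n β) {u c : Equiv.Perm (Fin n)}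
    (h : ChainLE n u c) {t : List ℕ} (ht : t.Sublist β) :
    ChainLE n (downFold n u β) (c * wordProd n t) := by
  induction β generalizing u c t with
  | nil =>
    rw [List.sublist_nil.1 ht, wordProd_nil, mul_one]
    exact h
  | cons j β ih =>
    obtain ⟨hj, hβ'⟩ := List.forall_mem_cons.1 hβ
    have hu := (chainLE_downStep_self hj u).trans h
    change ChainLE n (downFold n (downStep n u j) β) _
    rcases List.sublist_cons_iff.1 ht with ht | ⟨t, rfl, ht₁⟩
    · exact ih hβ' hu ht
    · rw [wordProd_cons, ← mul_assoc]
      refine ih hβ' ?_ ht₁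
      by_cases hc : len n (c * simpleRefl n j) < len n c
      · exact chainLE_downStep_mul_simpleRefl h hj hc
      · exact hu.tail (bruhatStep_mul_simpleRefl hj (by
          have := len_mul_simpleRefl hj c
          omega))

lemma exists_downFold_eq {β : List ℕ} (hβ : IsSimpleWord n β) (v : Equiv.Perm (Fin n)) :
    ∃ t, t.Sublist β ∧ downFold n v β = v * wordProd n t ∧
      len n (downFold n v β) + t.length = len n v := by
  induction β generalizing v with
  | nil => exact ⟨[], List.Sublist.refl _, by simp [downFold], by simp [downFold]⟩
  | cons j β ih =>
    obtain ⟨hj, hβ'⟩ := List.forall_mem_cons.1 hβ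
    change ∃ t, t.Sublist (j :: β) ∧ downFold n (downStep n v j) β = v * wordProd n t ∧
      len n (downFold n (downStep n v j) β) + t.length = len n v
    by_cases hd : len n (v * simpleRefl n j) < len n v
    · obtain ⟨t, ht, he, hl⟩ := ih hβ' (v * simpleRefl n j)
      have := len_mul_simpleRefl hj v
      refine ⟨j :: t, ht.cons_cons j, ?_, ?_⟩
      · rw [downStep, if_pos hd, he, wordProd_cons, mul_assoc]
      · rw [downStep, if_pos hd, List.length_cons]
        omega
    · obtain ⟨t, ht, he, hl⟩ := ih hβ' v
      rw [downStep, if_neg hd]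
      exact ⟨t, ht.trans (List.sublist_cons_self j β), he, hl⟩

lemma bruhatLE_inv {u w : Equiv.Perm (Fin n)} (h : bruhatLE n u w) : bruhatLE n u⁻¹ w⁻¹ :=
  bruhatLE_iff_chainLE.2 (bruhatLE_iff_chainLE.1 h).inv

lemma exists_least_mul_interval (u σ : Equiv.Perm (Fin n)) :
    ∃ b₀, bruhatLE n b₀ σ ∧
      ∀ c b, bruhatLE n u c → bruhatLE n b σ → bruhatLE n (u * b₀) (c * b) := by
  obtain ⟨β, hβ, rfl⟩ := exists_reduced_word σ
  obtain ⟨t, ht, he, hlen⟩ := exists_downFold_eq hβ.1 u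
  have htr : IsReduced n t :=
    isReduced_of_len_mul_add_length (IsSimpleWord.sublist hβ.1 ht) (he ▸ hlen)
  refine ⟨wordProd n t, ⟨β, t, hβ, rfl, ht, htr, rfl⟩, fun c b huc hb => ?_⟩
  obtain ⟨t', ht', -, rfl⟩ := exists_sublist_of_chainLE (bruhatLE_iff_chainLE.1 hb) hβ rfl
  rw [← he]
  exact bruhatLE_iff_chainLE.2 (chainLE_downFold hβ.1 (bruhatLE_iff_chainLE.1 huc) ht')

theorem isBruhatLeast_interval_set_interval_general (n : ℕ)
    (K : Set (Equiv.Perm (Fin n))) (u : Equiv.Perm (Fin n)) (hu : IsBruhatLeast n K u)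
    (σ₁ σ₂ : Equiv.Perm (Fin n)) :
    ∃ m, IsBruhatLeast n
        {x | ∃ a c b, bruhatLE n a σ₁ ∧ c ∈ K ∧ bruhatLE n b σ₂ ∧ x = a * c * b} m ∧
      IsBruhatLeast n
        {x | ∃ a b, bruhatLE n a σ₁ ∧ bruhatLE n b σ₂ ∧ x = a * u * b} m := by
  obtain ⟨b₀, hb₀, hright⟩ := exists_least_mul_interval u σ₂
  obtain ⟨a₀, ha₀, hleft⟩ := exists_least_mul_interval (u * b₀)⁻¹ σ₁⁻¹
  have ha₀' : bruhatLE n a₀⁻¹ σ₁ := by simpa using bruhatLE_inv ha₀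
  have hmin : ∀ a c b, bruhatLE n a σ₁ → c ∈ K → bruhatLE n b σ₂ →
      bruhatLE n (a₀⁻¹ * u * b₀) (a * c * b) := by
    intro a c b ha hc hb
    have h := hleft _ _ (bruhatLE_inv (hright c b (hu.2 c hc) hb)) (bruhatLE_inv ha)
    simpa [mul_assoc] using bruhatLE_inv h
  refine ⟨a₀⁻¹ * u * b₀, ⟨⟨a₀⁻¹, u, b₀, ha₀', hu.1, hb₀, rfl⟩, ?_⟩,
    ⟨a₀⁻¹, b₀, ha₀', hb₀, rfl⟩, ?_⟩
  · rintro _ ⟨a, c, b, ha, hc, hb, rfl⟩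
    exact hmin a c b ha hc hb
  · rintro _ ⟨a, b, ha, hb, rfl⟩
    exact hmin a u b ha hu.1 hb

/-- If `K ⊆ S_n` has a unique minimal element `u` in the Bruhat order
and `σ₁, σ₂ ∈ S_n`, then `I(σ₁) K I(σ₂)` has a unique minimal element, `I(σ₁) u I(σ₂)`
has a unique minimal element, and these two minima coincide. -/
theorem isBruhatLeast_interval_set_interval (n : ℕ) (hn : 1 ≤ n)
    (K : Set (Equiv.Perm (Fin n))) (u : Equiv.Perm (Fin n)) (hu : IsBruhatLeast n K u)
    (σ₁ σ₂ : Equiv.Perm (Fin n)) :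
    ∃ m, IsBruhatLeast n
        {x | ∃ a c b, bruhatLE n a σ₁ ∧ c ∈ K ∧ bruhatLE n b σ₂ ∧ x = a * c * b} m ∧
      IsBruhatLeast n
        {x | ∃ a b, bruhatLE n a σ₁ ∧ bruhatLE n b σ₂ ∧ x = a * u * b} m :=
  isBruhatLeast_interval_set_interval_general n K u hu σ₁ σ₂

end KK
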